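/- Let K be an imaginary quadratic field whose class number h(K) is odd. Then the discriminant of K belongs to P*₋, i.e., the discriminant of K is -4, -8, or -p for a prime p ≡ 3 (mod 4); equivalently, exactly one prime number ramifies in K/ℚ. -/

import Mathlib

/-!
Write `𝓞 K = ℤ[θ]` with `θ ^ 2 = t θ - n`, so that `discr K = t ^ 2 - 4 n < 0` and
`4 N(x + y θ) = (2 x + t y) ^ 2 + |discr K| y ^ 2`. Integral closedness of `𝓞 K` rules out odd
prime squares in the discriminant. Unless the discriminant is `-4`, `-8` or `-p` with
`p ≡ 3 (mod 4)`, some prime `p` with `4 p < |discr K|` ramifies: `𝔭 = (p, θ - r)` satisfies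
`𝔭 ^ 2 = (p)` for a suitable `r`, while no element has norm `p`, so `𝔭` is not principal and its
class has order `2`.
-/

open NumberField
open scoped nonZeroDivisors

lemma Nat.four_mul_minFac_lt {D : ℕ} (hodd : Odd D) (h1 : D ≠ 1) (hD : ¬ D.Prime)
    (hsq : ¬ D.minFac ^ 2 ∣ D) : 4 * D.minFac < D := by
  set p := D.minFac
  have hp : p.Prime := Nat.minFac_prime h1
  obtain ⟨M, hM⟩ := Nat.minFac_dvd D
  have hpM : p ≤ M := by
    have h := Nat.minFac_sq_le_self hodd.pos hD
    rw [sq] at h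
    exact Nat.le_of_mul_le_mul_left (h.trans_eq hM) hp.pos
  have hMp : M ≠ p := by rintro rfl; exact hsq ⟨1, by rw [sq, mul_one, ← hM]⟩
  have hp_odd : Odd p := hodd.of_dvd_nat (Nat.minFac_dvd D)
  have hM_odd : Odd M := hodd.of_dvd_nat ⟨p, by rw [hM, mul_comm]⟩
  have hp3 : 3 ≤ p := by have := hp.two_le; rcases hp_odd with ⟨k, hk⟩; omega
  have hM5 : 5 ≤ M := by rcases hp_odd with ⟨k, hk⟩; rcases hM_odd with ⟨l, hl⟩; omega
  rw [hM]
  nlinarith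

lemma Int.exists_dvd_two_mul_sub_and_dvd {t n P Q : ℤ} (hP : Odd P) (hQ : Q ∣ P ^ 2)
    (hQd : Q ∣ t ^ 2 - 4 * n) : ∃ r, P ∣ 2 * r - t ∧ Q ∣ r ^ 2 - t * r + n := by
  obtain ⟨k, rfl⟩ := hP
  refine ⟨t * (k + 1), ⟨t, by ring⟩, ?_⟩
  have hQ4 : IsCoprime Q 4 :=
    IsCoprime.of_isCoprime_of_dvd_left ⟨1, -(k ^ 2 + k), by ring⟩ hQ
  refine hQ4.dvd_of_dvd_mul_left ?_
  have h4 : 4 * ((t * (k + 1)) ^ 2 - t * (t * (k + 1)) + n) =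
      t ^ 2 * (2 * k + 1) ^ 2 - (t ^ 2 - 4 * n) := by
    ring
  rw [h4]
  exact dvd_sub (hQ.mul_left _) hQd

lemma natAbs_binaryForm_ne_prime {t n x y : ℤ} {p : ℕ} (hp : p.Prime)
    (hlt : 4 * (p : ℤ) < 4 * n - t ^ 2) : (x ^ 2 + t * x * y + n * y ^ 2).natAbs ≠ p := by
  intro h
  have h4 : 4 * (x ^ 2 + t * x * y + n * y ^ 2) =
      (2 * x + t * y) ^ 2 + (4 * n - t ^ 2) * y ^ 2 := by
    ring
  have hp0 : (0 : ℤ) < p := by exact_mod_cast hp.pos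
  have hQ : x ^ 2 + t * x * y + n * y ^ 2 = p := by
    rw [← h, Int.natAbs_of_nonneg (by nlinarith [sq_nonneg (2 * x + t * y), sq_nonneg y])]
  rcases eq_or_ne y 0 with rfl | hy
  · exact (Nat.prime_iff_prime_int.mp hp).not_isSquare ⟨x, by linear_combination -hQ⟩
  · have : 1 ≤ y ^ 2 := by have := sq_pos_of_ne_zero hy; omega
    nlinarith [sq_nonneg (2 * x + t * y)]

/-- `r` is a double root of `X ^ 2 - t X + n` modulo `p`, so that `(p, θ - r)` is the prime above
`p` when `θ ^ 2 = t θ - n`. -/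
def HasSmallRamifiedPrime (t n : ℤ) : Prop :=
  ∃ p : ℕ, p.Prime ∧ 4 * (p : ℤ) < 4 * n - t ^ 2 ∧
    ∃ r : ℤ, (p : ℤ) ∣ 2 * r - t ∧ (p : ℤ) ∣ r ^ 2 - t * r + n

lemma discr_cases_of_even {t n : ℤ} (ht : Even t) (hneg : t ^ 2 - 4 * n < 0) :
    t ^ 2 - 4 * n = -4 ∨ t ^ 2 - 4 * n = -8 ∨ HasSmallRamifiedPrime t n := by
  obtain ⟨s, rfl⟩ := ht
  have hd : (s + s) ^ 2 - 4 * n = -4 * (n - s ^ 2) := by ring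
  by_cases hsmall : n - s ^ 2 ≤ 2
  · omega
  refine Or.inr (Or.inr ⟨2, Nat.prime_two, by push_cast; omega, ?_⟩)
  -- `r ^ 2 - t * r + n` is `n - s ^ 2` at `r = s` and `n - s ^ 2 + 1` at `r = s - 1`
  rcases Int.even_or_odd (n - s ^ 2) with ⟨k, hk⟩ | ⟨k, hk⟩
  · exact ⟨s, ⟨0, by ring⟩, ⟨k, by push_cast; linear_combination hk⟩⟩
  · exact ⟨s - 1, ⟨-1, by ring⟩, ⟨k + 1, by push_cast; linear_combination hk⟩⟩

lemma discr_cases_of_odd {t n : ℤ} (ht : Odd t) (hneg : t ^ 2 - 4 * n < 0)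
    (hsq : ∀ p : ℕ, p.Prime → Odd p → ¬ (p : ℤ) ^ 2 ∣ t ^ 2 - 4 * n) :
    (∃ p : ℕ, p.Prime ∧ p % 4 = 3 ∧ t ^ 2 - 4 * n = -p) ∨ HasSmallRamifiedPrime t n := by
  obtain ⟨D, hD⟩ := Int.eq_ofNat_of_zero_le (by linarith : 0 ≤ 4 * n - t ^ 2)
  have hD4 : D % 4 = 3 := by
    obtain ⟨k, rfl⟩ := ht
    have : (D : ℤ) = 4 * (n - k ^ 2 - k - 1) + 3 := by rw [← hD]; ring
    omega
  by_cases hprime : D.Prime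
  · exact Or.inl ⟨D, hprime, hD4, by omega⟩
  have hodd : Odd D := Nat.odd_iff.mpr (by omega)
  set p := D.minFac
  have hp : p.Prime := Nat.minFac_prime (by omega)
  have hp_odd : Odd p := hodd.of_dvd_nat (Nat.minFac_dvd D)
  have hdvd_discr {m : ℕ} (hm : m ∣ D) : (m : ℤ) ∣ t ^ 2 - 4 * n := by
    rw [← dvd_neg, neg_sub, hD]
    exact Int.natCast_dvd_natCast.mpr hm
  have hlt : 4 * p < D := Nat.four_mul_minFac_lt hodd (by omega) hprime fun h ↦
    hsq p hp hp_odd (by exact_mod_cast hdvd_discr h)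
  obtain ⟨r, hr⟩ := Int.exists_dvd_two_mul_sub_and_dvd ((Int.odd_coe_nat p).mpr hp_odd)
    (dvd_pow_self _ two_ne_zero) (hdvd_discr (Nat.minFac_dvd D))
  exact Or.inr ⟨p, hp, by omega, r, hr⟩

lemma discr_cases {t n : ℤ} (hneg : t ^ 2 - 4 * n < 0)
    (hsq : ∀ p : ℕ, p.Prime → Odd p → ¬ (p : ℤ) ^ 2 ∣ t ^ 2 - 4 * n) :
    t ^ 2 - 4 * n = -4 ∨ t ^ 2 - 4 * n = -8 ∨
      (∃ p : ℕ, p.Prime ∧ p % 4 = 3 ∧ t ^ 2 - 4 * n = -p) ∨ HasSmallRamifiedPrime t n := by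
  rcases Int.even_or_odd t with ht | ht
  · rcases discr_cases_of_even ht hneg with h | h | h <;> simp [h]
  · rcases discr_cases_of_odd ht hneg hsq with h | h <;> simp [h]

open Polynomial in
lemma IsIntegrallyClosed.dvd_of_sq_add_mul_add_eq_zero {R : Type*} [CommRing R] [IsDomain R]
    [IsIntegrallyClosed R] {c β a e : R} (h : β ^ 2 + c * a * β + c ^ 2 * e = 0) : c ∣ β := by
  rcases eq_or_ne c 0 with rfl | hc
  · simpa using h
  have hc' : algebraMap R (FractionRing R) c ≠ 0 :=
    IsFractionRing.to_map_ne_zero_of_mem_nonZeroDivisors (mem_nonZeroDivisors_of_ne_zero hc)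
  set ξ := algebraMap R (FractionRing R) β / algebraMap R (FractionRing R) c
  have hint : IsIntegral R ξ := by
    refine ⟨X ^ 2 + (C a * X + C e), monic_X_pow_add (degree_linear_le.trans_lt (by norm_num)), ?_⟩
    have h' := congrArg (algebraMap R (FractionRing R)) h
    simp only [map_add, map_mul, map_pow, map_zero] at h'
    simp only [eval₂_add, eval₂_pow, eval₂_mul, eval₂_X, eval₂_C, ξ]
    field_simp
    linear_combination h'
  obtain ⟨y, hy⟩ := IsIntegrallyClosed.isIntegral_iff.mp hint
  refine ⟨y, IsFractionRing.injective R (FractionRing R) ?_⟩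
  rw [map_mul, hy, mul_div_cancel₀ _ hc']

lemma Ideal.span_pair_sq_eq_span_singleton {R : Type*} [CommRing R] {p β a c u v : R}
    (h : β ^ 2 + p * a * β + p * c = 0) (huv : u * p + v * c = 1) :
    Ideal.span {p, β} ^ 2 = Ideal.span {p} := by
  rw [sq, Ideal.span_pair_mul_span_pair]
  apply le_antisymm
  · have hβ : β * β = p * (-(a * β) - c) := by linear_combination h
    simp only [Ideal.span_le, Set.insert_subset_iff, Set.singleton_subset_iff, SetLike.mem_coe,
      Ideal.mem_span_singleton, hβ]
    exact ⟨dvd_mul_right _ _, dvd_mul_right _ _, dvd_mul_left _ _, dvd_mul_right _ _⟩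
  · rw [Ideal.span_singleton_le_iff_mem]
    have hp : u * (p * p) + (-(v * a)) * (p * β) + (-v) * (β * β) = p := by
      linear_combination p * huv - v * h
    have hmem : u * (p * p) + (-(v * a)) * (p * β) + (-v) * (β * β) ∈
        Ideal.span {p * p, p * β, β * p, β * β} := by
      refine Ideal.add_mem _ (Ideal.add_mem _ ?_ ?_) ?_ <;>
        exact Ideal.mul_mem_left _ _ (Ideal.subset_span (by simp))
    rwa [hp] at hmem

lemma ClassGroup.even_natCard_of_not_isPrincipal {R : Type*} [CommRing R] [IsDedekindDomain R]
    {I : Ideal R} (hI : I ≠ ⊥) (hsq : (I ^ 2).IsPrincipal) (hnp : ¬ I.IsPrincipal) :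
    Even (Nat.card (ClassGroup R)) := by
  have hI0 : I ∈ (Ideal R)⁰ := mem_nonZeroDivisors_of_ne_zero hI
  set g := ClassGroup.mk0 ⟨I, hI0⟩
  have hg2 : g ^ 2 = 1 := by
    rw [← map_pow]
    exact (ClassGroup.mk0_eq_one_iff _).mpr hsq
  have hg : orderOf g = 2 := orderOf_eq_prime hg2 ((ClassGroup.mk0_eq_one_iff hI0).not.mpr hnp)
  exact even_iff_two_dvd.mpr (hg ▸ orderOf_dvd_natCard g)

lemma Module.Basis.exists_basis_zero_eq_of_isCoprime {R M : Type*} [CommRing R] [AddCommGroup M]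
    [Module R M] (e : Module.Basis (Fin 2) R M) {v : M}
    (hv : IsCoprime (e.repr v 0) (e.repr v 1)) : ∃ b : Module.Basis (Fin 2) R M, b 0 = v := by
  obtain ⟨u, w, huw⟩ := hv
  set A : Matrix (Fin 2) (Fin 2) R := !![e.repr v 0, -w; e.repr v 1, u]
  have hA : IsUnit A.det := by
    rw [show A.det = 1 by rw [Matrix.det_fin_two_of]; linear_combination huw]
    exact isUnit_one
  refine ⟨e.map (Matrix.toLinearEquiv e A hA), ?_⟩
  rw [Module.Basis.map_apply]
  show Matrix.toLin e e A (e 0) = v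
  rw [Matrix.toLin_self, Fin.sum_univ_two]
  simpa only [A, Matrix.of_apply, Matrix.cons_val_zero, Matrix.cons_val_one,
    Matrix.cons_val_fin_one, Fin.sum_univ_two] using e.sum_repr v

namespace Module.Basis

variable {R : Type*} [CommRing R] (b : Module.Basis (Fin 2) ℤ R) {t n : ℤ}

lemma exists_eq_intCast_add_mul (hb : b 0 = 1) (α : R) : ∃ x y : ℤ, α = x + y * b 1 :=
  ⟨b.repr α 0, b.repr α 1, by
    simpa [Fin.sum_univ_two, hb, zsmul_eq_mul] using (b.sum_repr α).symm⟩

lemma exists_sq_eq (hb : b 0 = 1) : ∃ t n : ℤ, b 1 ^ 2 = t * b 1 - n := by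
  obtain ⟨x, y, hxy⟩ := b.exists_eq_intCast_add_mul hb (b 1 ^ 2)
  exact ⟨y, -x, by rw [hxy]; push_cast; ring⟩

lemma repr_intCast_add_mul (hb : b 0 = 1) (x y : ℤ) :
    b.repr ((x : R) + y * b 1) = Finsupp.single 0 x + Finsupp.single 1 y := by
  have h : (x : R) + y * b 1 = x • b 0 + y • b 1 := by
    rw [hb, zsmul_eq_mul, zsmul_eq_mul, mul_one]
  rw [h, map_add, map_zsmul, map_zsmul, b.repr_self, b.repr_self, Finsupp.smul_single_one,
    Finsupp.smul_single_one]

lemma intCast_ne_zero (hb : b 0 = 1) {P : ℤ} (hP : P ≠ 0) : (P : R) ≠ 0 := by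
  intro h
  have h0 := congrArg (fun α ↦ b.repr α 0) h
  simp only [← zsmul_one, ← hb, map_zsmul, b.repr_self, map_zero] at h0
  simp_all

lemma isUnit_of_intCast_dvd_sub (hb : b 0 = 1) {P r : ℤ} (h : (P : R) ∣ b 1 - r) :
    IsUnit P := by
  obtain ⟨δ, hδ⟩ := h
  have hθ : b 1 - (r : R) = ((-r : ℤ) : R) + ((1 : ℤ) : R) * b 1 := by push_cast; ring
  have h1 := congrArg (fun α ↦ b.repr α 1) hδ
  rw [hθ, b.repr_intCast_add_mul hb, ← zsmul_eq_mul, map_zsmul] at h1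
  simp at h1
  exact IsUnit.of_mul_eq_one _ h1.symm

lemma leftMulMatrix_intCast_add_mul (hb : b 0 = 1) (hθ : b 1 ^ 2 = t * b 1 - n) (x y : ℤ) :
    Algebra.leftMulMatrix b ((x : R) + y * b 1) = !![x, -n * y; y, x + t * y] := by
  have h0 : ((x : R) + y * b 1) * b 0 = x + y * b 1 := by rw [hb, mul_one]
  have h1 : ((x : R) + y * b 1) * b 1 = ((-n * y : ℤ) : R) + ((x + t * y : ℤ) : R) * b 1 := by
    push_cast
    linear_combination y * hθ
  rw [Matrix.eta_fin_two (Algebra.leftMulMatrix b _)]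
  simp only [Algebra.leftMulMatrix_eq_repr_mul, h0, h1, b.repr_intCast_add_mul hb]
  simp

lemma norm_intCast_add_mul (hb : b 0 = 1) (hθ : b 1 ^ 2 = t * b 1 - n) (x y : ℤ) :
    Algebra.norm ℤ ((x : R) + y * b 1) = x ^ 2 + t * x * y + n * y ^ 2 := by
  rw [Algebra.norm_eq_matrix_det b, b.leftMulMatrix_intCast_add_mul hb hθ, Matrix.det_fin_two_of]
  ring

lemma trace_intCast_add_mul (hb : b 0 = 1) (hθ : b 1 ^ 2 = t * b 1 - n) (x y : ℤ) :
    Algebra.trace ℤ R ((x : R) + y * b 1) = 2 * x + t * y := by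
  rw [Algebra.trace_eq_matrix_trace b, b.leftMulMatrix_intCast_add_mul hb hθ,
    Matrix.trace_fin_two_of]
  ring

lemma discr_eq_sq_sub_four_mul (hb : b 0 = 1) (hθ : b 1 ^ 2 = t * b 1 - n) :
    Algebra.discr ℤ b = t ^ 2 - 4 * n := by
  have htr := b.trace_intCast_add_mul hb hθ
  have h1 : Algebra.trace ℤ R 1 = 2 := by simpa using htr 1 0
  have hθ1 : Algebra.trace ℤ R (b 1) = t := by simpa using htr 0 1
  have hθ2 : b 1 * b 1 = ((-n : ℤ) : R) + ((t : ℤ) : R) * b 1 := by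
    push_cast
    linear_combination hθ
  rw [Algebra.discr_def, Matrix.det_fin_two]
  simp only [Algebra.traceMatrix_apply, Algebra.traceForm_apply, hb, one_mul, mul_one]
  rw [hθ2, h1, hθ1, htr]
  ring

lemma isUnit_of_dvd_two_mul_sub_of_sq_dvd [IsDomain R] [IsIntegrallyClosed R] (hb : b 0 = 1)
    (hθ : b 1 ^ 2 = t * b 1 - n) {P r : ℤ} (h₁ : P ∣ 2 * r - t)
    (h₂ : P ^ 2 ∣ r ^ 2 - t * r + n) : IsUnit P := by
  obtain ⟨a, ha⟩ := h₁
  obtain ⟨e, he⟩ := h₂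
  refine b.isUnit_of_intCast_dvd_sub hb (r := r)
    (IsIntegrallyClosed.dvd_of_sq_add_mul_add_eq_zero (a := (a : R)) (e := (e : R)) ?_)
  have ha' := congrArg (Int.cast : ℤ → R) ha
  have he' := congrArg (Int.cast : ℤ → R) he
  push_cast at ha' he'
  linear_combination hθ - (b 1 - r) * ha' - he'

lemma not_sq_dvd_discr [IsDomain R] [IsIntegrallyClosed R] (hb : b 0 = 1)
    (hθ : b 1 ^ 2 = t * b 1 - n) {p : ℕ} (hp : p.Prime) (hodd : Odd p) :
    ¬ (p : ℤ) ^ 2 ∣ t ^ 2 - 4 * n := fun h ↦ by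
  obtain ⟨r, h₁, h₂⟩ :=
    Int.exists_dvd_two_mul_sub_and_dvd ((Int.odd_coe_nat p).mpr hodd) dvd_rfl h
  exact (Nat.prime_iff_prime_int.mp hp).not_isUnit
    (b.isUnit_of_dvd_two_mul_sub_of_sq_dvd hb hθ h₁ h₂)

lemma not_isPrincipal_of_sq_eq_span [IsDomain R] (hb : b 0 = 1) (hθ : b 1 ^ 2 = t * b 1 - n)
    {p : ℕ} (hp : p.Prime) (hlt : 4 * (p : ℤ) < 4 * n - t ^ 2) {I : Ideal R}
    (hI : I ^ 2 = Ideal.span {((p : ℤ) : R)}) : ¬ I.IsPrincipal := by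
  rintro ⟨α, rfl⟩
  rw [Ideal.submodule_span_eq, Ideal.span_singleton_pow,
    Ideal.span_singleton_eq_span_singleton] at hI
  obtain ⟨x, y, rfl⟩ := b.exists_eq_intCast_add_mul hb α
  have hp' : ((p : ℤ) : R) = ((p : ℤ) : R) + ((0 : ℤ) : R) * b 1 := by simp
  have hnorm := hI.map (Algebra.norm ℤ)
  rw [map_pow, hp', b.norm_intCast_add_mul hb hθ, b.norm_intCast_add_mul hb hθ,
    Int.associated_iff_natAbs] at hnorm
  refine natAbs_binaryForm_ne_prime (x := x) (y := y) hp hlt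
    (Nat.pow_left_injective two_ne_zero ?_)
  simpa [Int.natAbs_pow] using hnorm

lemma even_natCard_classGroup [IsDedekindDomain R] (hb : b 0 = 1) (hθ : b 1 ^ 2 = t * b 1 - n)
    (h : HasSmallRamifiedPrime t n) : Even (Nat.card (ClassGroup R)) := by
  obtain ⟨p, hp, hlt, r, ⟨a, ha⟩, ⟨c, hc⟩⟩ := h
  have hpZ := Nat.prime_iff_prime_int.mp hp
  obtain ⟨u, v, huv⟩ : IsCoprime (p : ℤ) c := (Prime.coprime_iff_not_dvd hpZ).mpr
    fun ⟨e, he⟩ ↦ hpZ.not_isUnit (b.isUnit_of_dvd_two_mul_sub_of_sq_dvd hb hθ ⟨a, ha⟩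
      ⟨e, by rw [hc, he]; ring⟩)
  have ha' := congrArg (Int.cast : ℤ → R) ha
  have hc' := congrArg (Int.cast : ℤ → R) hc
  have huv' := congrArg (Int.cast : ℤ → R) huv
  push_cast at ha' hc' huv'
  have hI : Ideal.span {((p : ℤ) : R), b 1 - r} ^ 2 = Ideal.span {((p : ℤ) : R)} :=
    Ideal.span_pair_sq_eq_span_singleton (a := (a : R)) (c := (c : R)) (u := u) (v := v)
      (by push_cast; linear_combination hθ - (b 1 - r) * ha' - hc') (by push_cast; exact huv')
  refine ClassGroup.even_natCard_of_not_isPrincipal ?_ (hI ▸ ⟨_, rfl⟩)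
    (b.not_isPrincipal_of_sq_eq_span hb hθ hp hlt hI)
  rintro h0
  rw [h0, sq, Ideal.bot_mul, eq_comm, Ideal.span_singleton_eq_bot] at hI
  exact b.intCast_ne_zero hb (by exact_mod_cast hp.ne_zero) hI

end Module.Basis

namespace NumberField

variable {K : Type*} [Field K] [NumberField K]

lemma isCoprime_repr_one (e : Module.Basis (Fin 2) ℤ (𝓞 K)) :
    IsCoprime (e.repr 1 0) (e.repr 1 1) := by
  rw [Int.isCoprime_iff_gcd_eq_one]
  obtain ⟨a, ha⟩ := Int.gcd_dvd_left (e.repr 1 0) (e.repr 1 1)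
  obtain ⟨c, hc⟩ := Int.gcd_dvd_right (e.repr 1 0) (e.repr 1 1)
  set g := Int.gcd (e.repr 1 0) (e.repr 1 1)
  have hdvd : algebraMap ℤ (𝓞 K) g ∣ 1 := ⟨a • e 0 + c • e 1, by
    conv_lhs => rw [← e.sum_repr 1]
    simp only [Fin.sum_univ_two, ha, hc, zsmul_eq_mul, algebraMap_int_eq, eq_intCast]
    push_cast
    ring⟩
  have hunit : IsUnit ((g : ℤ) ^ Module.finrank ℤ (𝓞 K)) := by
    rw [← Algebra.norm_algebraMap]
    exact (isUnit_of_dvd_one hdvd).map _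
  rcases Int.isUnit_iff.mp ((isUnit_pow_iff Module.finrank_pos.ne').mp hunit) with h | h <;> omega

lemma exists_basis_zero_eq_one (hdeg : Module.finrank ℚ K = 2) :
    ∃ b : Module.Basis (Fin 2) ℤ (𝓞 K), b 0 = 1 :=
  let e := Module.finBasisOfFinrankEq ℤ (𝓞 K) (by rw [RingOfIntegers.rank, hdeg])
  e.exists_basis_zero_eq_of_isCoprime (isCoprime_repr_one e)

open InfinitePlace in
lemma discr_neg_of_exists_im_ne_zero (hdeg : Module.finrank ℚ K = 2)
    (him : ∃ φ : K →+* ℂ, ∃ x : K, (φ x).im ≠ 0) : discr K < 0 := by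
  obtain ⟨φ, x, hx⟩ := him
  have hc : nrComplexPlaces K ≠ 0 := by
    rw [Ne, nrComplexPlaces_eq_zero_iff]
    intro h
    have hφ := RingHom.congr_fun (ComplexEmbedding.isReal_iff.mp (h.complexEmbedding_isReal φ)) x
    rw [ComplexEmbedding.conjugate_coe_eq, Complex.conj_eq_iff_im] at hφ
    exact hx hφ
  have h1 : nrComplexPlaces K = 1 := by
    have := card_add_two_mul_card_eq_rank K
    omega
  have hsign := sign_discr K
  rw [h1, pow_one] at hsign
  exact Int.sign_eq_neg_one_iff_neg.mp hsign

end NumberField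

/-- If `K` is an imaginary quadratic field with odd class number, then its discriminant
belongs to `P*₋`, i.e. it is `-4`, `-8`, or `-p` for a prime `p ≡ 3 (mod 4)`. -/
theorem stmt6 (K : Type*) [Field K] [NumberField K]
    (hdeg : Module.finrank ℚ K = 2)
    (him : ∃ φ : K →+* ℂ, ∃ x : K, (φ x).im ≠ 0)
    (hodd : Odd (Nat.card (ClassGroup (𝓞 K)))) :
    NumberField.discr K = -4 ∨ NumberField.discr K = -8 ∨
      ∃ p : ℕ, p.Prime ∧ p % 4 = 3 ∧ NumberField.discr K = -(p : ℤ) := by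
  obtain ⟨b, hb⟩ := exists_basis_zero_eq_one hdeg
  obtain ⟨t, n, hθ⟩ := b.exists_sq_eq hb
  have hd : discr K = t ^ 2 - 4 * n := by
    rw [← discr_eq_discr K b, b.discr_eq_sq_sub_four_mul hb hθ]
  have hneg := discr_neg_of_exists_im_ne_zero hdeg him
  rw [hd] at hneg ⊢
  rcases discr_cases hneg fun p hp hodd ↦ b.not_sq_dvd_discr hb hθ hp hodd with h | h | h | h
  · exact Or.inl h
  · exact Or.inr (Or.inl h)
  · exact Or.inr (Or.inr h)
  · exact absurd hodd (Nat.not_odd_iff_even.mpr (b.even_natCard_classGroup hb hθ h))
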